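/- arXiv:1702.04971 — 8 statements merged into one kernel-verified Lean document; each statement's English description precedes it below -/
import Mathlib

section
/- Let χ : ℝ → ℝ be an even function with χ(0) = 1 satisfying |1 − χ(z)| ≤ C₅·z² for all z ∈ ℝ (as holds for χ(z) = (cos z + 1)·ψ_E(z/2)/(2·sinc z) under filter condition (v)). Let b₀ ∈ ℝ^d satisfy ‖Ω²·C_B·b₀‖² ≤ H₀, and let Δe : ℝ → ℝ^d be the exact solution of Δe''(t) = −Ω²·Δe(t) + G·Δe(t) with initial values Δe(t₀) = 0 and Δe'(t₀) = (I − χ(τΩ))·C_B·b₀. Then for all t with t₀ ≤ t ≤ T one has ‖Δe(t)‖ ≤ (T − t₀)·C₅·√H₀·τ². -/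
/-!
`Δe` solves the abstract wave equation `u'' = -A u` with `A = Ω² + C_Eᵀ C_E` symmetric positive
semidefinite, so the energy `‖u'‖² + ⟪A u, u⟫` is conserved. Since `Δe(t₀) = 0`, this bounds
`‖Δe'(t)‖` by `‖Δe'(t₀)‖` for all `t`, and the mean value inequality gives
`‖Δe(t)‖ ≤ (t - t₀) ‖Δe'(t₀)‖`. Finally `|1 - χ(τω)| ≤ C₅ τ² ω²` entrywise, so
`‖Δe'(t₀)‖ ≤ C₅ τ² ‖Ω² C_B b₀‖ ≤ C₅ τ² √H₀`.
-/

noncomputable def sinc (z : ℝ) : ℝ := if z = 0 then 1 else Real.sin z / z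

noncomputable def mulE {d : ℕ} (A : Matrix (Fin d) (Fin d) ℝ)
    (v : EuclideanSpace ℝ (Fin d)) : EuclideanSpace ℝ (Fin d) :=
  (WithLp.equiv 2 (Fin d → ℝ)).symm (A.mulVec ((WithLp.equiv 2 (Fin d → ℝ)) v))

noncomputable def fDiag {d : ℕ} (f : ℝ → ℝ) (s : ℝ) (ωv : Fin d → ℝ) :
    Matrix (Fin d) (Fin d) ℝ :=
  Matrix.diagonal fun i => f (s * ωv i)

open scoped RealInnerProductSpace Matrix

section Wave

variable {E : Type*} [NormedAddCommGroup E] [InnerProductSpace ℝ E]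
  {L : E →L[ℝ] E} {u v : ℝ → E}

theorem hasDerivAt_wave_energy (hL : L.IsSymmetric) (hu : ∀ t, HasDerivAt u (v t) t)
    (hv : ∀ t, HasDerivAt v (-L (u t)) t) (t : ℝ) :
    HasDerivAt (fun t => ⟪v t, v t⟫ + ⟪L (u t), u t⟫) 0 t := by
  have hLu : HasDerivAt (fun t => L (u t)) (L (v t)) t :=
    L.hasFDerivAt.comp_hasDerivAt t (hu t)
  refine (((hv t).inner ℝ (hv t)).add (hLu.inner ℝ (hu t))).congr_deriv ?_
  rw [inner_neg_left, inner_neg_right, show ⟪L (v t), u t⟫ = ⟪v t, L (u t)⟫ from hL _ _,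
    real_inner_comm (L (u t))]
  ring

theorem wave_energy_eq (hL : L.IsSymmetric) (hu : ∀ t, HasDerivAt u (v t) t)
    (hv : ∀ t, HasDerivAt v (-L (u t)) t) (s t : ℝ) :
    ⟪v s, v s⟫ + ⟪L (u s), u s⟫ = ⟪v t, v t⟫ + ⟪L (u t), u t⟫ :=
  is_const_of_deriv_eq_zero
    (fun x => (hasDerivAt_wave_energy hL hu hv x).differentiableAt)
    (fun x => (hasDerivAt_wave_energy hL hu hv x).deriv) s t

theorem norm_deriv_le_of_wave (hL : L.IsPositive) (hu : ∀ t, HasDerivAt u (v t) t)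
    (hv : ∀ t, HasDerivAt v (-L (u t)) t) {t₀ : ℝ} (hu₀ : u t₀ = 0) (t : ℝ) :
    ‖v t‖ ≤ ‖v t₀‖ := by
  have hE := wave_energy_eq hL.isSymmetric hu hv t t₀
  rw [hu₀, map_zero, inner_zero_left, add_zero, real_inner_self_eq_norm_sq,
    real_inner_self_eq_norm_sq] at hE
  have hpos : 0 ≤ ⟪L (u t), u t⟫ := hL.re_inner_nonneg_left (u t)
  exact pow_le_pow_iff_left₀ (norm_nonneg _) (norm_nonneg _) two_ne_zero |>.mp (by linarith)

theorem norm_le_of_wave (hL : L.IsPositive) (hu : ∀ t, HasDerivAt u (v t) t)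
    (hv : ∀ t, HasDerivAt v (-L (u t)) t) {t₀ t : ℝ} (hu₀ : u t₀ = 0) (ht : t₀ ≤ t) :
    ‖u t‖ ≤ ‖v t₀‖ * (t - t₀) := by
  have h := norm_image_sub_le_of_norm_deriv_le_segment' (fun x _ => (hu x).hasDerivWithinAt)
    (fun x _ => norm_deriv_le_of_wave hL hu hv hu₀ x) t (Set.right_mem_Icc.mpr ht)
  rwa [hu₀, sub_zero] at h

end Wave

theorem EuclideanSpace.norm_le_of_forall_norm_apply_le {ι : Type*} [Fintype ι]
    {x y : EuclideanSpace ℝ ι} (h : ∀ i, ‖x i‖ ≤ ‖y i‖) : ‖x‖ ≤ ‖y‖ := by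
  rw [EuclideanSpace.norm_eq, EuclideanSpace.norm_eq]
  exact Real.sqrt_le_sqrt <| Finset.sum_le_sum fun i _ => pow_le_pow_left₀ (norm_nonneg _) (h i) 2

theorem nonneg_of_forall_abs_le_mul_sq {f : ℝ → ℝ} {C : ℝ} (h : ∀ z, |f z| ≤ C * z ^ 2) :
    0 ≤ C := by
  simpa using (abs_nonneg _).trans (h 1)

section Matrix

variable {d : ℕ}

theorem mulE_eq_toEuclideanLin (A : Matrix (Fin d) (Fin d) ℝ) (v : EuclideanSpace ℝ (Fin d)) :
    mulE A v = A.toEuclideanLin v := rfl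

theorem mulE_diagonal_apply (a : Fin d → ℝ) (v : EuclideanSpace ℝ (Fin d)) (i : Fin d) :
    mulE (Matrix.diagonal a) v i = a i * v i := by
  simp [mulE, Matrix.mulVec_diagonal]

theorem posSemidef_diagonal_sq_add_transpose_mul_self (ωv : Fin d → ℝ)
    (CE : Matrix (Fin d) (Fin d) ℝ) : (Matrix.diagonal ωv ^ 2 + CEᵀ * CE).PosSemidef := by
  refine .add ?_ ?_
  · rw [Matrix.diagonal_pow]
    exact .diagonal fun i => sq_nonneg (ωv i)
  · simpa [Matrix.conjTranspose_eq_transpose_of_trivial] using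
      Matrix.posSemidef_conjTranspose_mul_self CE

theorem one_sub_fDiag (f : ℝ → ℝ) (s : ℝ) (ωv : Fin d → ℝ) :
    1 - fDiag f s ωv = Matrix.diagonal fun i => 1 - f (s * ωv i) := by
  rw [fDiag, ← Matrix.diagonal_one, Matrix.diagonal_sub]

theorem norm_mulE_one_sub_fDiag_le {χ : ℝ → ℝ} {C : ℝ} (hχ : ∀ z, |1 - χ z| ≤ C * z ^ 2)
    (τ : ℝ) (ωv : Fin d → ℝ) (w : EuclideanSpace ℝ (Fin d)) :
    ‖mulE (1 - fDiag χ τ ωv) w‖ ≤ C * τ ^ 2 * ‖mulE (Matrix.diagonal ωv ^ 2) w‖ := by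
  have hC := nonneg_of_forall_abs_le_mul_sq hχ
  calc ‖mulE (1 - fDiag χ τ ωv) w‖ ≤ ‖(C * τ ^ 2) • mulE (Matrix.diagonal ωv ^ 2) w‖ := by
        refine EuclideanSpace.norm_le_of_forall_norm_apply_le fun i => ?_
        rw [one_sub_fDiag, Matrix.diagonal_pow, PiLp.smul_apply, mulE_diagonal_apply,
          mulE_diagonal_apply, smul_eq_mul, Pi.pow_apply]
        simp only [norm_mul, norm_pow, Real.norm_eq_abs, abs_of_nonneg hC, sq_abs]
        refine (mul_le_mul_of_nonneg_right (hχ (τ * ωv i)) (abs_nonneg (w i))).trans_eq ?_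
        ring
    _ = C * τ ^ 2 * ‖mulE (Matrix.diagonal ωv ^ 2) w‖ := by
        rw [norm_smul, Real.norm_of_nonneg (by positivity)]

end Matrix

theorem stmt2_general
    (d : ℕ)
    (CE CB : Matrix (Fin d) (Fin d) ℝ) (hCB : CB = CE.transpose)
    (ωv : Fin d → ℝ)
    (t0 T τ H0 C5 : ℝ)
    (χ : ℝ → ℝ)
    (hχ : ∀ z : ℝ, |1 - χ z| ≤ C5 * z^2)
    (b0 : EuclideanSpace ℝ (Fin d))
    (hb0 : ‖mulE ((Matrix.diagonal ωv)^2) (mulE CB b0)‖^2 ≤ H0)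
    (Δe Δed : ℝ → EuclideanSpace ℝ (Fin d))
    (hΔe : ∀ t, HasDerivAt Δe (Δed t) t)
    (hΔed : ∀ t, HasDerivAt Δed
      (-mulE ((Matrix.diagonal ωv)^2) (Δe t) + mulE (-(CB * CE)) (Δe t)) t)
    (hinit : Δe t0 = 0)
    (hinitd : Δed t0 = mulE (1 - fDiag χ τ ωv) (mulE CB b0)) :
    ∀ t : ℝ, t0 ≤ t → t ≤ T →
      ‖Δe t‖ ≤ (T - t0) * C5 * Real.sqrt H0 * τ^2 := by
  intro t ht htT
  subst hCB
  set L := (Matrix.diagonal ωv ^ 2 + CEᵀ * CE).toEuclideanLin.toContinuousLinearMap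
  have hL : L.IsPositive := Matrix.isPositive_toEuclideanLin_iff.mpr
    (posSemidef_diagonal_sq_add_transpose_mul_self ωv CE)
  have hwave : ∀ t, HasDerivAt Δed (-L (Δe t)) t := fun t => by
    convert hΔed t using 1
    simp [L, mulE_eq_toEuclideanLin, Matrix.toEuclideanLin, add_comm]
  have hC5 : 0 ≤ C5 := nonneg_of_forall_abs_le_mul_sq hχ
  have hv₀ : ‖Δed t0‖ ≤ C5 * τ ^ 2 * Real.sqrt H0 := hinitd ▸
    (norm_mulE_one_sub_fDiag_le hχ τ ωv _).trans
      (mul_le_mul_of_nonneg_left (Real.le_sqrt_of_sq_le hb0) (by positivity))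
  calc ‖Δe t‖ ≤ ‖Δed t0‖ * (t - t0) := norm_le_of_wave hL hΔe hwave hinit ht
    _ ≤ C5 * τ ^ 2 * Real.sqrt H0 * (T - t0) :=
      mul_le_mul hv₀ (by linarith) (by linarith) ((norm_nonneg _).trans hv₀)
    _ = (T - t0) * C5 * Real.sqrt H0 * τ ^ 2 := by ring

/-- Stability estimate, Lemma on the perturbation of the exact
solution:  for an even function `χ` with `χ(0) = 1` and `|1 − χ(z)| ≤ C₅·z²`, the exact
solution `Δe` of `Δe'' = −Ω²·Δe + G·Δe` with `Δe(t₀) = 0` and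
`Δe'(t₀) = (I − χ(τΩ))·C_B·b₀`, where `‖Ω²·C_B·b₀‖² ≤ H₀`, satisfies
`‖Δe(t)‖ ≤ (T − t₀)·C₅·√H₀·τ²` for all `t₀ ≤ t ≤ T`. -/
theorem stmt2
    (d : ℕ) (hd : 1 ≤ d)
    (CE CB : Matrix (Fin d) (Fin d) ℝ) (hCB : CB = CE.transpose)
    (ow : ℝ) (how : 0 < ow)
    (ωv : Fin d → ℝ) (hωv : ∀ i, ωv i = 0 ∨ ωv i = ow)
    (t0 T τ H0 C5 : ℝ) (hτ : 0 < τ) (hH0 : 0 < H0) (hC5 : 0 < C5)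
    (χ : ℝ → ℝ) (hχeven : ∀ z, χ (-z) = χ z) (hχ0 : χ 0 = 1)
    (hχ : ∀ z : ℝ, |1 - χ z| ≤ C5 * z^2)
    (b0 : EuclideanSpace ℝ (Fin d))
    (hb0 : ‖mulE ((Matrix.diagonal ωv)^2) (mulE CB b0)‖^2 ≤ H0)
    (Δe Δed : ℝ → EuclideanSpace ℝ (Fin d))
    (hΔe : ∀ t, HasDerivAt Δe (Δed t) t)
    (hΔed : ∀ t, HasDerivAt Δed
      (-mulE ((Matrix.diagonal ωv)^2) (Δe t) + mulE (-(CB * CE)) (Δe t)) t)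
    (hinit : Δe t0 = 0)
    (hinitd : Δed t0 = mulE (1 - fDiag χ τ ωv) (mulE CB b0)) :
    ∀ t : ℝ, t0 ≤ t → t ≤ T →
      ‖Δe t‖ ≤ (T - t0) * C5 * Real.sqrt H0 * τ^2 :=
  stmt2_general d CE CB hCB ωv t0 T τ H0 C5 χ hχ b0 hb0 Δe Δed hΔe hΔed hinit hinitd
end

section
/- Let e : ℝ → ℝ^d be twice differentiable with e''(t) = −Ω²·e(t) + G·e(t) for all t, e(t₀) = e₀ and e'(t₀) = ė₀ := C_B·b₀ − Ω²·p₀, where the initial data satisfy ‖Ω·e₀‖² ≤ (2/3)H₀, ‖C_B·b₀‖² ≤ (1/3)H₀, ‖Ω²·p₀‖² ≤ (1/3)H₀ and ‖C_E·e₀‖² ≤ 2H₀. Then the Hamiltonian H(e(t), e'(t)) := (1/2)‖e'(t)‖² + (1/2)‖Ω·e(t)‖² + (1/2)‖C_E·e(t)‖² satisfies H(e(t), e'(t)) ≤ 2·H₀ for all t ≥ t₀. -/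
/-!
With `K := ΩᵀΩ + C_EᵀC_E`, which is symmetric, the equation reads `e'' = -K e` and
`‖Ω e‖² + ‖C_E e‖² = ⟪e, K e⟫`, so `2H = ‖e'‖² + ⟪e, K e⟫` has derivative
`2⟪e'', e'⟫ + 2⟪e', K e⟫ = 0` and is constant. At `t₀` the bound
`‖C_B b₀ - Ω² p₀‖² ≤ 2‖C_B b₀‖² + 2‖Ω² p₀‖²` gives `2H ≤ (4/3 + 2/3 + 2) H₀ = 4 H₀`.
-/

open scoped RealInnerProductSpace

section EnergyConservation

variable {E : Type*} [NormedAddCommGroup E] [InnerProductSpace ℝ E] {K : E →L[ℝ] E}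

lemma HasDerivAt.inner_apply_self_of_isSymmetric (hK : (K : E →ₗ[ℝ] E).IsSymmetric)
    {x : ℝ → E} {v : E} {t : ℝ} (hx : HasDerivAt x v t) :
    HasDerivAt (fun s ↦ ⟪x s, K (x s)⟫) (2 * ⟪v, K (x t)⟫) t :=
  (hx.inner ℝ (K.hasFDerivAt.comp_hasDerivAt t hx)).congr_deriv <| by
    rw [Function.comp_apply, ← real_inner_comm,
      show ⟪K v, x t⟫ = ⟪v, K (x t)⟫ from hK v (x t)]
    ring

theorem norm_sq_add_inner_apply_eq_of_hasDerivAt_neg (hK : (K : E →ₗ[ℝ] E).IsSymmetric)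
    {x v : ℝ → E} (hx : ∀ t, HasDerivAt x (v t) t) (hv : ∀ t, HasDerivAt v (-K (x t)) t)
    (s t : ℝ) : ‖v t‖ ^ 2 + ⟪x t, K (x t)⟫ = ‖v s‖ ^ 2 + ⟪x s, K (x s)⟫ := by
  have hderiv : ∀ τ, HasDerivAt (fun σ ↦ ‖v σ‖ ^ 2 + ⟪x σ, K (x σ)⟫) 0 τ := fun τ ↦ by
    refine ((hv τ).norm_sq.add ((hx τ).inner_apply_self_of_isSymmetric hK)).congr_deriv ?_
    rw [inner_neg_right, real_inner_comm]
    ring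
  exact is_const_of_deriv_eq_zero (fun τ ↦ (hderiv τ).differentiableAt)
    (fun τ ↦ (hderiv τ).deriv) t s

end EnergyConservation

lemma Matrix.inner_toEuclideanCLM_star_mul_self {n : Type*} [Fintype n] [DecidableEq n]
    (A : Matrix n n ℝ) (x : EuclideanSpace ℝ n) :
    ⟪x, toEuclideanCLM (𝕜 := ℝ) (star A * A) x⟫ = ‖toEuclideanCLM (𝕜 := ℝ) A x‖ ^ 2 := by
  rw [map_mul, map_star, ContinuousLinearMap.star_eq_adjoint,
    ContinuousLinearMap.apply_norm_sq_eq_inner_adjoint_right]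
  rfl

lemma mulE_eq_toEuclideanCLM {d : ℕ} (A : Matrix (Fin d) (Fin d) ℝ)
    (v : EuclideanSpace ℝ (Fin d)) : mulE A v = Matrix.toEuclideanCLM (𝕜 := ℝ) A v :=
  rfl

theorem stmt6_general
    (d : ℕ)
    (CE CB : Matrix (Fin d) (Fin d) ℝ) (hCB : CB = CE.transpose)
    (ωv : Fin d → ℝ)
    (t0 H0 : ℝ)
    (p0 e0 b0 : EuclideanSpace ℝ (Fin d))
    (e ed : ℝ → EuclideanSpace ℝ (Fin d))
    (he : ∀ t, HasDerivAt e (ed t) t)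
    (hed : ∀ t, HasDerivAt ed
      (-mulE ((Matrix.diagonal ωv)^2) (e t) + mulE (-(CB * CE)) (e t)) t)
    (hinit : e t0 = e0)
    (hinitd : ed t0 = mulE CB b0 - mulE ((Matrix.diagonal ωv)^2) p0)
    (hΩe0 : ‖mulE (Matrix.diagonal ωv) e0‖^2 ≤ (2/3) * H0)
    (hCBb0 : ‖mulE CB b0‖^2 ≤ (1/3) * H0)
    (hΩ2p0 : ‖mulE ((Matrix.diagonal ωv)^2) p0‖^2 ≤ (1/3) * H0)
    (hCEe0 : ‖mulE CE e0‖^2 ≤ 2 * H0) :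
    ∀ t : ℝ, t0 ≤ t →
      (1/2) * ‖ed t‖^2 + (1/2) * ‖mulE (Matrix.diagonal ωv) (e t)‖^2
        + (1/2) * ‖mulE CE (e t)‖^2 ≤ 2 * H0 := by
  intro t _
  set Ω := Matrix.diagonal ωv
  set K := Matrix.toEuclideanCLM (𝕜 := ℝ) (star Ω * Ω + star CE * CE)
  have hK : IsSelfAdjoint K := ((IsSelfAdjoint.star_mul_self Ω).add (.star_mul_self CE)).map _
  have hΩ : star Ω * Ω = Ω ^ 2 := by
    rw [Matrix.star_eq_conjTranspose, Matrix.diagonal_conjTranspose, star_trivial, sq]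
  have hCE : star CE * CE = CB * CE := by
    rw [hCB, Matrix.star_eq_conjTranspose, Matrix.conjTranspose_eq_transpose_of_trivial]
  have hKe : ∀ x, -mulE (Ω ^ 2) x + mulE (-(CB * CE)) x = -K x := fun x ↦ by
    simp only [mulE_eq_toEuclideanCLM, K, hΩ, hCE, map_add, map_neg]
    rw [_root_.neg_apply, _root_.add_apply, neg_add]
  have hquad : ∀ x, ⟪x, K x⟫ = ‖mulE Ω x‖ ^ 2 + ‖mulE CE x‖ ^ 2 := fun x ↦ by
    simp only [K]
    rw [map_add, _root_.add_apply, inner_add_right,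
      Matrix.inner_toEuclideanCLM_star_mul_self, Matrix.inner_toEuclideanCLM_star_mul_self]
    rfl
  have hcons := norm_sq_add_inner_apply_eq_of_hasDerivAt_neg hK.isSymmetric he
    (fun s ↦ hKe (e s) ▸ hed s) t t0
  have hed0 : ‖ed t0‖ ^ 2 ≤ 2 * (‖mulE CB b0‖ ^ 2 + ‖mulE (Ω ^ 2) p0‖ ^ 2) :=
    hinitd ▸ (pow_le_pow_left₀ (norm_nonneg _) (norm_sub_le _ _) 2).trans add_sq_le
  rw [hquad, hquad, hinit] at hcons
  linarith

/-- Boundedness of the Hamiltonian:  for the exact solution of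
`e'' = −Ω²·e + G·e` with `e(t₀) = e₀`, `e'(t₀) = C_B·b₀ − Ω²·p₀`, under the stated
bounds on the initial data the Hamiltonian
`H(e, e') = (1/2)‖e'‖² + (1/2)‖Ω·e‖² + (1/2)‖C_E·e‖²` satisfies
`H(e(t), e'(t)) ≤ 2·H₀` for all `t ≥ t₀`. -/
theorem stmt6
    (d : ℕ) (hd : 1 ≤ d)
    (CE CB : Matrix (Fin d) (Fin d) ℝ) (hCB : CB = CE.transpose)
    (ωv : Fin d → ℝ) (hωv : ∀ i, 0 ≤ ωv i)
    (t0 H0 : ℝ) (hH0 : 0 < H0)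
    (p0 e0 b0 : EuclideanSpace ℝ (Fin d))
    (e ed : ℝ → EuclideanSpace ℝ (Fin d))
    (he : ∀ t, HasDerivAt e (ed t) t)
    (hed : ∀ t, HasDerivAt ed
      (-mulE ((Matrix.diagonal ωv)^2) (e t) + mulE (-(CB * CE)) (e t)) t)
    (hinit : e t0 = e0)
    (hinitd : ed t0 = mulE CB b0 - mulE ((Matrix.diagonal ωv)^2) p0)
    (hΩe0 : ‖mulE (Matrix.diagonal ωv) e0‖^2 ≤ (2/3) * H0)
    (hCBb0 : ‖mulE CB b0‖^2 ≤ (1/3) * H0)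
    (hΩ2p0 : ‖mulE ((Matrix.diagonal ωv)^2) p0‖^2 ≤ (1/3) * H0)
    (hCEe0 : ‖mulE CE e0‖^2 ≤ 2 * H0) :
    ∀ t : ℝ, t0 ≤ t →
      (1/2) * ‖ed t‖^2 + (1/2) * ‖mulE (Matrix.diagonal ωv) (e t)‖^2
        + (1/2) * ‖mulE CE (e t)‖^2 ≤ 2 * H0 :=
  stmt6_general d CE CB hCB ωv t0 H0 p0 e0 b0 e ed he hed hinit hinitd hΩe0 hCBb0 hΩ2p0 hCEe0
end

section
/- Two-step reformulation of the triple splitting scheme: let (p_n, e_n, b_n), n ≥ 0, be generated by the triple splitting scheme with ψ_B ≡ φ_B ≡ 1 and even filter functions ψ_E, φ_E. Then for all n ≥ 1 the electric-field iterates satisfy the two-step recursion e_{n+1} − 2·cos(τΩ)·e_n + e_{n−1} = (τ²/2)·(cos(τΩ) + I)·ψ_E((τ/2)Ω)·G·φ_E((τ/2)Ω)·e_n, where G := −C_B·C_E, and for all n ≥ 0 the magnetic-flux iterates satisfy b_{n+1} = b_n − (τ/2)·C_E·φ_E((τ/2)Ω)·(e_n + e_{n+1}). -/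
/-- One step of the triple splitting scheme (with `ψ_B ≡ φ_B ≡ 1`),
acting on a state `(p, e, b)`. -/
noncomputable def tripleSplitStep {d : ℕ} (CE CB : Matrix (Fin d) (Fin d) ℝ)
    (ψE φE : ℝ → ℝ) (τ : ℝ) (ωv : Fin d → ℝ)
    (s : EuclideanSpace ℝ (Fin d) × EuclideanSpace ℝ (Fin d) × EuclideanSpace ℝ (Fin d)) :
    EuclideanSpace ℝ (Fin d) × EuclideanSpace ℝ (Fin d) × EuclideanSpace ℝ (Fin d) :=
  let p := s.1
  let e := s.2.1
  let b := s.2.2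
  let bh := b - (τ/2) • mulE CE (mulE (fDiag φE (τ/2) ωv) e)
  let ep := e + (τ/2) • mulE (fDiag ψE (τ/2) ωv) (mulE CB bh)
  let p1 := mulE (fDiag Real.cos τ ωv) p + τ • mulE (fDiag sinc τ ωv) ep
  let em := -mulE (Matrix.diagonal fun i => ωv i * Real.sin (τ * ωv i)) p
              + mulE (fDiag Real.cos τ ωv) ep
  let e1 := em + (τ/2) • mulE (fDiag ψE (τ/2) ωv) (mulE CB bh)
  let b1 := bh - (τ/2) • mulE CE (mulE (fDiag φE (τ/2) ωv) e1)
  (p1, e1, b1)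

/-!
Both identities are algebraic consequences of a single step. Writing the step with abstract
operators `C = cos(τΩ)`, `S = Ω sin(τΩ)`, `K = τ sinc(τΩ)`, `Ψ = (τ/2) ψ_E(τΩ/2) C_B` and
`Φ = (τ/2) C_E φ_E(τΩ/2)`, the only relations needed are `S K = I - C²` (from `z sinc z = sin z`
and `sin² + cos² = 1`) and `S C = C S`. They give `S p_{n+1} = -C e_{n+1} + (C + I) Ψ b_{n+1/2} + e_n`,
which eliminates `p` from the formula for `e_{n+2}`; together with
`b_{n+3/2} - b_{n+1/2} = -2 Φ e_{n+1}` this is the two-step recursion.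
-/

namespace SplittingScheme

variable {A M : Type*} [Ring A] [AddCommGroup M] [Module A M]

/-- `bh` is the half-step flux `b_{n+1/2}` and `ep` the intermediate field `e_n⁺`. -/
def step (C S K Ψ Φ : A) (x : M × M × M) : M × M × M :=
  let bh := x.2.2 - Φ • x.2.1
  let ep := x.2.1 + Ψ • bh
  let e := -(S • x.1) + C • ep + Ψ • bh
  (C • x.1 + K • ep, e, bh - Φ • e)

variable (C S K Ψ Φ : A) (x : M × M × M)

theorem step_snd_fst :
    (step C S K Ψ Φ x).2.1 = -(S • x.1) + C • x.2.1 + (C + 1) • Ψ • (x.2.2 - Φ • x.2.1) := by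
  simp only [step, smul_add, add_smul, one_smul]
  abel

theorem step_snd_snd :
    (step C S K Ψ Φ x).2.2 = x.2.2 - Φ • (x.2.1 + (step C S K Ψ Φ x).2.1) := by
  rw [smul_add]
  simp only [step]
  abel

theorem smul_step_fst (hSK : S * K = 1 - C * C) (hSC : S * C = C * S) :
    S • (step C S K Ψ Φ x).1
      = -(C • (step C S K Ψ Φ x).2.1) + (C + 1) • Ψ • (x.2.2 - Φ • x.2.1) + x.2.1 := by
  have hS (p v : M) : S • (C • p + K • v) = C • S • p + v - C • C • v := by
    rw [smul_add, ← mul_smul, ← mul_smul, hSC, hSK, sub_smul, one_smul, mul_smul, mul_smul]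
    abel
  simp only [step]
  rw [hS]
  simp only [smul_add, smul_neg, add_smul, one_smul]
  abel

theorem step_step_snd_fst (hSK : S * K = 1 - C * C) (hSC : S * C = C * S) :
    (step C S K Ψ Φ (step C S K Ψ Φ x)).2.1 - (2 * C) • (step C S K Ψ Φ x).2.1 + x.2.1
      = (-2 * (C + 1) * Ψ * Φ) • (step C S K Ψ Φ x).2.1 := by
  set y := step C S K Ψ Φ x
  have hbh : y.2.2 - Φ • y.2.1 = (x.2.2 - Φ • x.2.1) - (2 * Φ) • y.2.1 := by
    rw [step_snd_snd, smul_add, two_mul, add_smul]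
    abel
  rw [step_snd_fst, smul_step_fst C S K Ψ Φ x hSK hSC, hbh]
  simp only [smul_sub, mul_smul, neg_smul, two_smul, smul_add, add_smul, one_smul]
  abel

end SplittingScheme

open Matrix

theorem mul_sinc (z : ℝ) : z * sinc z = Real.sin z := by
  rcases eq_or_ne z 0 with rfl | hz
  · simp
  · rw [sinc, if_neg hz]
    field_simp

section TripleSplit

variable {d : ℕ} (CE CB : Matrix (Fin d) (Fin d) ℝ) (ψE φE : ℝ → ℝ) (τ : ℝ) (ωv : Fin d → ℝ)

local notation "L" => Matrix.toLpLinAlgEquiv (n := Fin d) (R := ℝ) 2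

theorem mulE_eq_toLpLinAlgEquiv (X : Matrix (Fin d) (Fin d) ℝ) (v : EuclideanSpace ℝ (Fin d)) :
    mulE X v = L X v := rfl

theorem diagonal_mul_sin_mul_smul_fDiag_sinc :
    diagonal (fun i => ωv i * Real.sin (τ * ωv i)) * (τ • fDiag sinc τ ωv)
      = 1 - fDiag Real.cos τ ωv * fDiag Real.cos τ ωv := by
  rw [fDiag, fDiag, ← diagonal_smul, diagonal_mul_diagonal, diagonal_mul_diagonal, ← diagonal_one,
    diagonal_sub]
  congr 1
  funext i
  have hsinc := mul_sinc (τ * ωv i)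
  have hpyth := Real.sin_sq_add_cos_sq (τ * ωv i)
  simp only [Pi.smul_apply, smul_eq_mul]
  linear_combination Real.sin (τ * ωv i) * hsinc + hpyth

theorem tripleSplitStep_eq_step :
    tripleSplitStep CE CB ψE φE τ ωv
      = SplittingScheme.step (L (fDiag Real.cos τ ωv))
          (L (diagonal fun i => ωv i * Real.sin (τ * ωv i))) (τ • L (fDiag sinc τ ωv))
          ((τ / 2) • (L (fDiag ψE (τ / 2) ωv) * L CB))
          ((τ / 2) • (L CE * L (fDiag φE (τ / 2) ωv))) := by
  funext x
  simp only [tripleSplitStep, SplittingScheme.step, Module.End.smul_def,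
    LinearMap.smul_apply, Module.End.mul_apply, mulE_eq_toLpLinAlgEquiv]

variable (x : EuclideanSpace ℝ (Fin d) × EuclideanSpace ℝ (Fin d) × EuclideanSpace ℝ (Fin d))

theorem tripleSplitStep_snd_snd :
    (tripleSplitStep CE CB ψE φE τ ωv x).2.2
      = x.2.2 - (τ / 2) • mulE CE (mulE (fDiag φE (τ / 2) ωv)
          (x.2.1 + (tripleSplitStep CE CB ψE φE τ ωv x).2.1)) := by
  rw [tripleSplitStep_eq_step]
  exact SplittingScheme.step_snd_snd (A := Module.End ℝ (EuclideanSpace ℝ (Fin d))) _ _ _ _ _ x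

theorem tripleSplitStep_step_snd_fst :
    (tripleSplitStep CE CB ψE φE τ ωv (tripleSplitStep CE CB ψE φE τ ωv x)).2.1
        - (2 : ℝ) • mulE (fDiag Real.cos τ ωv) (tripleSplitStep CE CB ψE φE τ ωv x).2.1 + x.2.1
      = (τ ^ 2 / 2) • mulE ((fDiag Real.cos τ ωv + 1) * fDiag ψE (τ / 2) ωv
            * (-(CB * CE)) * fDiag φE (τ / 2) ωv) (tripleSplitStep CE CB ψE φE τ ωv x).2.1 := by
  have hSK := congrArg L (diagonal_mul_sin_mul_smul_fDiag_sinc τ ωv)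
  rw [map_mul, map_smul, map_sub, map_one, map_mul] at hSK
  have hSC : L (diagonal fun i => ωv i * Real.sin (τ * ωv i)) * L (fDiag Real.cos τ ωv)
      = L (fDiag Real.cos τ ωv) * L (diagonal fun i => ωv i * Real.sin (τ * ωv i)) :=
    ((commute_diagonal _ _).map L).eq
  rw [tripleSplitStep_eq_step]
  convert SplittingScheme.step_step_snd_fst _ _ _ _ _ x hSK hSC using 2
  · rw [mulE_eq_toLpLinAlgEquiv, two_mul, add_smul, two_smul]
    rfl
  · rw [mulE_eq_toLpLinAlgEquiv, ← LinearMap.smul_apply]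
    congr 1
    simp only [map_mul, map_add, map_one, map_neg, smul_mul_assoc, mul_smul_comm, smul_smul,
      mul_assoc, neg_mul, mul_neg, smul_neg, two_mul, ← two_smul ℝ]
    congr 2
    ring

end TripleSplit

theorem stmt9_general
    (d : ℕ)
    (CE CB : Matrix (Fin d) (Fin d) ℝ)
    (ωv : Fin d → ℝ)
    (ψE φE : ℝ → ℝ)
    (τ : ℝ)
    (p0 e0 b0 : EuclideanSpace ℝ (Fin d)) :
    (∀ n : ℕ,
      ((tripleSplitStep CE CB ψE φE τ ωv)^[n + 2] (p0, e0, b0)).2.1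
        - (2 : ℝ) • mulE (fDiag Real.cos τ ωv)
            (((tripleSplitStep CE CB ψE φE τ ωv)^[n + 1] (p0, e0, b0)).2.1)
        + ((tripleSplitStep CE CB ψE φE τ ωv)^[n] (p0, e0, b0)).2.1
      = (τ^2/2) • mulE ((fDiag Real.cos τ ωv + 1) * fDiag ψE (τ/2) ωv
            * (-(CB * CE)) * fDiag φE (τ/2) ωv)
          (((tripleSplitStep CE CB ψE φE τ ωv)^[n + 1] (p0, e0, b0)).2.1)) ∧
    (∀ n : ℕ,
      ((tripleSplitStep CE CB ψE φE τ ωv)^[n + 1] (p0, e0, b0)).2.2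
      = ((tripleSplitStep CE CB ψE φE τ ωv)^[n] (p0, e0, b0)).2.2
        - (τ/2) • mulE CE (mulE (fDiag φE (τ/2) ωv)
            (((tripleSplitStep CE CB ψE φE τ ωv)^[n] (p0, e0, b0)).2.1
             + ((tripleSplitStep CE CB ψE φE τ ωv)^[n + 1] (p0, e0, b0)).2.1))) := by
  refine ⟨fun n => ?_, fun n => ?_⟩
  · rw [Function.iterate_succ_apply', Function.iterate_succ_apply']
    exact tripleSplitStep_step_snd_fst CE CB ψE φE τ ωv _
  · rw [Function.iterate_succ_apply']
    exact tripleSplitStep_snd_snd CE CB ψE φE τ ωv _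

/-- Two-step reformulation of the triple splitting scheme:
for the iterates `(p_n, e_n, b_n)` of the triple splitting scheme with `ψ_B ≡ φ_B ≡ 1`,
for all `n ≥ 1` the electric-field iterates satisfy
`e_{n+1} − 2·cos(τΩ)·e_n + e_{n−1} = (τ²/2)·(cos(τΩ)+I)·ψ_E((τ/2)Ω)·G·φ_E((τ/2)Ω)·e_n`
(here stated with the index shifted, `n ↦ n+1`), and for all `n ≥ 0` the magnetic-flux
iterates satisfy `b_{n+1} = b_n − (τ/2)·C_E·φ_E((τ/2)Ω)·(e_n + e_{n+1})`. -/
theorem stmt9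
    (d : ℕ) (hd : 1 ≤ d)
    (CE CB : Matrix (Fin d) (Fin d) ℝ)
    (ωv : Fin d → ℝ) (hωv : ∀ i, 0 ≤ ωv i)
    (ψE φE : ℝ → ℝ)
    (hψeven : ∀ z, ψE (-z) = ψE z) (hφeven : ∀ z, φE (-z) = φE z)
    (hψ0 : ψE 0 = 1) (hφ0 : φE 0 = 1)
    (τ : ℝ) (hτ : 0 < τ)
    (p0 e0 b0 : EuclideanSpace ℝ (Fin d)) :
    (∀ n : ℕ,
      ((tripleSplitStep CE CB ψE φE τ ωv)^[n + 2] (p0, e0, b0)).2.1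
        - (2 : ℝ) • mulE (fDiag Real.cos τ ωv)
            (((tripleSplitStep CE CB ψE φE τ ωv)^[n + 1] (p0, e0, b0)).2.1)
        + ((tripleSplitStep CE CB ψE φE τ ωv)^[n] (p0, e0, b0)).2.1
      = (τ^2/2) • mulE ((fDiag Real.cos τ ωv + 1) * fDiag ψE (τ/2) ωv
            * (-(CB * CE)) * fDiag φE (τ/2) ωv)
          (((tripleSplitStep CE CB ψE φE τ ωv)^[n + 1] (p0, e0, b0)).2.1)) ∧
    (∀ n : ℕ,
      ((tripleSplitStep CE CB ψE φE τ ωv)^[n + 1] (p0, e0, b0)).2.2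
      = ((tripleSplitStep CE CB ψE φE τ ωv)^[n] (p0, e0, b0)).2.2
        - (τ/2) • mulE CE (mulE (fDiag φE (τ/2) ωv)
            (((tripleSplitStep CE CB ψE φE τ ωv)^[n] (p0, e0, b0)).2.1
             + ((tripleSplitStep CE CB ψE φE τ ωv)^[n + 1] (p0, e0, b0)).2.1))) :=
  stmt9_general d CE CB ωv ψE φE τ p0 e0 b0
end

section
/- The filter function φ_E(z) = sinc(z) satisfies filter condition (vi) with constant C₆ = 1/4: for every real z, |sinc z − sinc(z/2)| ≤ (1/4)·|z·sin(z/2)|. -/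
/-- the filter choice `φ_E(z) = sinc(z)` satisfies filter condition
(vi) with constant `C₆ = 1/4`:
`|sinc z − sinc(z/2)| ≤ (1/4)·|z·sin(z/2)|` for all real `z`. -/
theorem stmt15 (z : ℝ) :
    |sinc z - sinc (z/2)| ≤ (1/4) * |z * Real.sin (z/2)| := by
  rcases eq_or_ne z 0 with rfl | hz
  · simp [sinc]
  have hz2 : z / 2 ≠ 0 := by positivity
  have hsin : Real.sin z = 2 * Real.sin (z/2) * Real.cos (z/2) := by
    have := Real.sin_two_mul (z/2)
    rw [show 2 * (z/2) = z by ring] at this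
    linarith
  have hcos : Real.cos (z/2) - 1 = -(2 * Real.sin (z/4) ^ 2) := by
    have := Real.cos_two_mul (z/4)
    have h2 := Real.sin_sq_add_cos_sq (z/4)
    rw [show 2 * (z/4) = z/2 by ring] at this
    nlinarith
  have key : sinc z - sinc (z/2) = 2 * Real.sin (z/2) * (Real.cos (z/2) - 1) / z := by
    simp only [sinc, if_neg hz, if_neg hz2]
    field_simp
    ring_nf
    rw [hsin]; ring
  rw [key, hcos]
  have hb : |Real.sin (z/4)| ≤ |z/4| := Real.abs_sin_le_abs
  have hb2 : Real.sin (z/4) ^ 2 ≤ (z/4)^2 := by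
    rw [← sq_abs, ← sq_abs (z/4)]
    exact pow_le_pow_left₀ (abs_nonneg _) hb 2
  rw [abs_div, abs_mul]
  rw [div_le_iff₀ (abs_pos.2 hz)]
  have : |2 * Real.sin (z/2)| * |(-(2 * Real.sin (z/4) ^ 2))| ≤
      2 * |Real.sin (z/2)| * (2 * (z/4)^2) := by
    rw [abs_mul, abs_neg, abs_mul, abs_of_nonneg (by positivity : (0:ℝ) ≤ Real.sin (z/4)^2)]
    simp only [abs_two]
    gcongr
  calc |2 * Real.sin (z/2)| * |(-(2 * Real.sin (z/4) ^ 2))|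
      ≤ 2 * |Real.sin (z/2)| * (2 * (z/4)^2) := this
    _ = 1/4 * (|Real.sin (z/2)| * (|z| * |z|)) := by
        rw [show (z/4)^2 = z^2/16 by ring, ← sq_abs z]; ring
    _ = 1/4 * |z * Real.sin (z/2)| * |z| := by rw [abs_mul]; ring
end

section
/- The filter function φ_E(z) = sinc(z) satisfies filter condition (viii) with constant C₈ = 1/2: for every real z, |sinc(z/2)² − sinc(z)·sinc(z/2)| ≤ (1/2)·sin(z/2)². -/
/-- the filter choice `φ_E(z) = sinc(z)` satisfies filter condition
(viii) with constant `C₈ = 1/2`: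
`|sinc(z/2)² − sinc(z)·sinc(z/2)| ≤ (1/2)·sin(z/2)²` for all real `z`. -/
theorem stmt16 (z : ℝ) :
    |(sinc (z/2))^2 - sinc z * sinc (z/2)| ≤ (1/2) * (Real.sin (z/2))^2 := by
  rcases eq_or_ne z 0 with h | h
  · simp [sinc, h]
  · have hz2 : z / 2 ≠ 0 := div_ne_zero h two_ne_zero
    have hsin : Real.sin z = 2 * Real.sin (z/2) * Real.cos (z/2) := by
      have := Real.sin_two_mul (z/2)
      rwa [show 2 * (z/2) = z by ring] at this
    have key : (sinc (z/2))^2 - sinc z * sinc (z/2)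
        = 4 * (Real.sin (z/2))^2 / z^2 * (1 - Real.cos (z/2)) := by
      simp only [sinc, if_neg h, if_neg hz2, hsin]
      field_simp
      ring
    rw [key]
    have hc1 : Real.cos (z/2) ≤ 1 := Real.cos_le_one _
    have hnn : 0 ≤ 4 * (Real.sin (z/2))^2 / z^2 * (1 - Real.cos (z/2)) := by
      apply mul_nonneg (by positivity) (by linarith)
    rw [abs_of_nonneg hnn]
    have hb : 1 - Real.cos (z/2) ≤ z^2 / 8 := by
      have := Real.one_sub_sq_div_two_le_cos (x := z/2)
      nlinarith
    have hz2sq : (0:ℝ) < z^2 := by positivity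
    calc 4 * (Real.sin (z/2))^2 / z^2 * (1 - Real.cos (z/2))
        ≤ 4 * (Real.sin (z/2))^2 / z^2 * (z^2/8) := by
          apply mul_le_mul_of_nonneg_left hb (by positivity)
      _ = (1/2) * (Real.sin (z/2))^2 := by field_simp; ring
end

section
/- The original filter choice ψ_E(z) = sinc(z) of Tückmantel et al. violates filter condition (i): there is NO constant C ≥ 0 such that |(cos z + 1)·sinc(z/2)| ≤ C·sinc(z/2)² for all real z. (The violation occurs at even multiples of π, where sinc(z/2) has a simple zero while cos z + 1 = 2.) -/
/-- the original filter choice `ψ_E(z) = sinc(z)` of Tückmantel et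
al. violates filter condition (i): there is no constant `C ≥ 0` such that
`|(cos z + 1)·sinc(z/2)| ≤ C·sinc(z/2)²` for all real `z`. -/
theorem stmt17 :
    ¬ ∃ C : ℝ, 0 ≤ C ∧
      ∀ z : ℝ, |(Real.cos z + 1) * sinc (z/2)| ≤ C * (sinc (z/2))^2 := by
  rintro ⟨C, hC, h⟩
  set ε : ℝ := min (Real.pi/4) (Real.pi/(4*(C+1))) with hε
  have hπ := Real.pi_pos
  have hC1 : (0:ℝ) < C + 1 := by linarith
  have hε0 : 0 < ε := lt_min (by positivity) (by positivity)
  have hε4 : ε ≤ Real.pi/4 := min_le_left _ _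
  have hεπ : ε < Real.pi := by linarith
  set x : ℝ := Real.pi + ε with hx
  have hx0 : 0 < x := by positivity
  have hsin : Real.sin x = -Real.sin ε := by
    rw [hx, add_comm, Real.sin_add_pi]
  have hsinε : 0 < Real.sin ε := Real.sin_pos_of_pos_of_lt_pi hε0 hεπ
  have hsx : sinc x = -Real.sin ε / x := by
    rw [sinc, if_neg (by positivity), hsin]
  have hsne : sinc x ≠ 0 := by
    rw [hsx]
    exact div_ne_zero (by linarith) (by positivity)
  have habs : |sinc x| = Real.sin ε / x := by
    rw [hsx, abs_div, abs_of_pos hx0, abs_neg, abs_of_pos hsinε]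
  -- bound |sinc x| ≤ ε / π
  have hbound : |sinc x| ≤ ε / Real.pi := by
    rw [habs]
    apply div_le_div₀ (le_of_lt hε0) (Real.sin_le hε0.le) hπ
    linarith
  -- cos (2x) + 1 ≥ 1
  have hcos : 1 ≤ Real.cos (2*x) + 1 := by
    have : Real.cos (2*x) = Real.cos (2*ε) := by
      rw [hx]
      have : 2*(Real.pi + ε) = 2*ε + 2*Real.pi := by ring
      rw [this, Real.cos_add_two_pi]
    rw [this]
    have : 0 ≤ Real.cos (2*ε) :=
      Real.cos_nonneg_of_mem_Icc ⟨by linarith, by linarith⟩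
    linarith
  have key := h (2*x)
  have hxx : (2*x)/2 = x := by ring
  rw [hxx] at key
  have h1 : |sinc x| ≤ |(Real.cos (2*x) + 1) * sinc x| := by
    rw [abs_mul]
    nth_rewrite 1 [show |sinc x| = 1 * |sinc x| by ring]
    apply mul_le_mul_of_nonneg_right _ (abs_nonneg _)
    rw [abs_of_nonneg (by linarith)]
    exact hcos
  have h2 : C * (sinc x)^2 = (C * |sinc x|) * |sinc x| := by
    rw [← sq_abs]; ring
  have h3 : 1 ≤ C * |sinc x| := by
    have hpos : 0 < |sinc x| := abs_pos.mpr hsne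
    nlinarith [h1.trans key]
  have h4 : C * |sinc x| ≤ C * (ε / Real.pi) := by
    apply mul_le_mul_of_nonneg_left hbound hC
  have h5 : ε ≤ Real.pi/(4*(C+1)) := min_le_right _ _
  have h6 : C * (ε / Real.pi) ≤ C / (4*(C+1)) := by
    have h5' : ε / Real.pi ≤ 1 / (4*(C+1)) := by
      rw [div_le_div_iff₀ hπ (by positivity)]
      have := (le_div_iff₀ (by positivity : (0:ℝ) < 4*(C+1))).mp h5
      linarith
    calc C * (ε / Real.pi) ≤ C * (1/(4*(C+1))) :=
          mul_le_mul_of_nonneg_left h5' hC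
      _ = C / (4*(C+1)) := by ring
  have h7 : C / (4*(C+1)) < 1 := by
    rw [div_lt_one (by positivity)]; linarith
  linarith
end

section
/- The new filter choice ψ_E(z) = sinc(z)² satisfies the multifrequency filter condition (33e) with constant C₁₃ = 1: for every real z, |sinc(z)² − (1/2)·(cos z + 1)·sinc(z/2)²·cos z| ≤ |sin z · sin(z/2)|. Equivalently, using (1/2)(cos z + 1)·sinc(z/2)² = sinc(z)², one has sinc(z)²·|1 − cos z| ≤ |sin z · sin(z/2)|. -/
/-!
Write `a = sinc z` and `b = sinc (z/2)`. The double-angle formulas give `a = b · cos (z/2)`,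
so `(1/2)(cos z + 1) b² = cos² (z/2) b² = a²`, and the left-hand side of (33e) is
`a² (1 - cos z)`. With `sin z = z a`, `sin (z/2) = (z/2) b` and `1 - cos z = 2 sin² (z/2)`,
the two sides of the bound become `(z²/2)(ab)²` and `(z²/2)|ab|`, and `(ab)² ≤ |ab|`
because `|sinc| ≤ 1`.
-/

open Real hiding sinc

theorem sinc_eq_real_sinc : sinc = Real.sinc := rfl

theorem mul_sinc_s18 (x : ℝ) : x * sinc x = sin x := by
  rcases eq_or_ne x 0 with rfl | hx
  · simp
  · rw [sinc_eq_real_sinc, Real.sinc_of_ne_zero hx, mul_div_cancel₀ _ hx]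

theorem sinc_eq_sinc_half_mul_cos_half (x : ℝ) : sinc x = sinc (x / 2) * cos (x / 2) := by
  rcases eq_or_ne x 0 with rfl | hx
  · simp [sinc]
  · refine mul_left_cancel₀ hx ?_
    calc x * sinc x = sin (2 * (x / 2)) := by rw [mul_sinc_s18, mul_div_cancel₀ _ two_ne_zero]
      _ = 2 * ((x / 2) * sinc (x / 2)) * cos (x / 2) := by rw [sin_two_mul, mul_sinc_s18]
      _ = x * (sinc (x / 2) * cos (x / 2)) := by ring

theorem sinc_sq_eq_half_mul_cos_add_one_mul_sinc_half_sq (x : ℝ) :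
    sinc x ^ 2 = 1 / 2 * (cos x + 1) * sinc (x / 2) ^ 2 := by
  have hcos : cos x = 2 * cos (x / 2) ^ 2 - 1 := by
    rw [← cos_two_mul, mul_div_cancel₀ _ two_ne_zero]
  rw [sinc_eq_sinc_half_mul_cos_half x, hcos]
  ring

theorem sinc_sq_mul_abs_one_sub_cos_le (x : ℝ) :
    sinc x ^ 2 * |1 - cos x| ≤ |sin x * sin (x / 2)| := by
  set a := sinc x
  set b := sinc (x / 2)
  have hcos : 1 - cos x = 2 * ((x / 2) * b) ^ 2 := by
    have hx : cos x = cos (2 * (x / 2)) := by rw [mul_div_cancel₀ _ two_ne_zero]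
    rw [mul_sinc_s18, hx, cos_two_mul_eq_one_sub]
    ring
  have hab : |a * b| ≤ 1 := by
    rw [abs_mul]
    exact mul_le_one₀ (Real.abs_sinc_le_one x) (abs_nonneg b) (Real.abs_sinc_le_one _)
  calc a ^ 2 * |1 - cos x| = x ^ 2 / 2 * |a * b| ^ 2 := by
        rw [hcos, abs_of_nonneg (by positivity), sq_abs]
        ring
    _ ≤ x ^ 2 / 2 * |a * b| := by
        gcongr
        exact pow_le_of_le_one (abs_nonneg _) hab two_ne_zero
    _ = |sin x * sin (x / 2)| := by
        rw [← mul_sinc_s18 x, ← mul_sinc_s18 (x / 2),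
          show x * a * (x / 2 * b) = x ^ 2 / 2 * (a * b) by ring, abs_mul (x ^ 2 / 2), abs_of_nonneg (by positivity : (0 : ℝ) ≤ x ^ 2 / 2)]

/-- the new filter choice `ψ_E(z) = sinc(z)²` satisfies the
multifrequency filter condition (33e) with constant `C₁₃ = 1`:
`|sinc(z)² − (1/2)·(cos z + 1)·sinc(z/2)²·cos z| ≤ |sin z · sin(z/2)|` for all real
`z`; equivalently `sinc(z)²·|1 − cos z| ≤ |sin z · sin(z/2)|`. -/
theorem stmt18 (z : ℝ) :
    |(sinc z)^2 - (1/2) * (Real.cos z + 1) * (sinc (z/2))^2 * Real.cos z|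
      ≤ |Real.sin z * Real.sin (z/2)| ∧
    (sinc z)^2 * |1 - Real.cos z| ≤ |Real.sin z * Real.sin (z/2)| := by
  have hlhs : (sinc z)^2 - (1/2) * (Real.cos z + 1) * (sinc (z/2))^2 * Real.cos z
      = (sinc z)^2 * (1 - Real.cos z) := by
    rw [← sinc_sq_eq_half_mul_cos_add_one_mul_sinc_half_sq]
    ring
  refine ⟨?_, sinc_sq_mul_abs_one_sub_cos_le z⟩
  rw [hlhs, abs_mul, abs_sq]
  exact sinc_sq_mul_abs_one_sub_cos_le z
end

section
/- The new filter choice ψ_E(z) = sinc(z)² satisfies the multifrequency filter condition (33b) with constant C₁₀ = 1: for every real z, |sinc(z/2)² − (1/2)·(cos z + 1)·sinc(z/2)²| ≤ |sin(z/2)|. Equivalently, sinc(z/2)²·sin(z/2)² ≤ |sin(z/2)|. -/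
lemma abs_sinc_le_one (x : ℝ) : |sinc x| ≤ 1 := by
  unfold sinc
  split
  · simp
  · rw [abs_div]
    rcases eq_or_ne x 0 with h | h
    · simp [h]
    · rw [div_le_one (abs_pos.mpr h)]
      exact Real.abs_sin_le_abs

lemma key (z : ℝ) : (sinc (z/2))^2 * (Real.sin (z/2))^2 ≤ |Real.sin (z/2)| := by
  have h1 : (sinc (z/2))^2 ≤ 1 := by
    have := abs_sinc_le_one (z/2)
    nlinarith [abs_nonneg (sinc (z/2)), sq_abs (sinc (z/2))]
  have h2 : (Real.sin (z/2))^2 ≤ |Real.sin (z/2)| := by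
    rw [← sq_abs]
    nlinarith [Real.abs_sin_le_one (z/2), abs_nonneg (Real.sin (z/2))]
  nlinarith [sq_nonneg (Real.sin (z/2)), sq_nonneg (sinc (z/2))]

/-- the new filter choice `ψ_E(z) = sinc(z)²` satisfies the
multifrequency filter condition (33b) with constant `C₁₀ = 1`:
`|sinc(z/2)² − (1/2)·(cos z + 1)·sinc(z/2)²| ≤ |sin(z/2)|` for all real `z`;
equivalently `sinc(z/2)²·sin(z/2)² ≤ |sin(z/2)|`. -/
theorem stmt19 (z : ℝ) :
    |(sinc (z/2))^2 - (1/2) * (Real.cos z + 1) * (sinc (z/2))^2| ≤ |Real.sin (z/2)| ∧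
    (sinc (z/2))^2 * (Real.sin (z/2))^2 ≤ |Real.sin (z/2)| := by
  refine ⟨?_, key z⟩
  have hc : Real.cos z = 1 - 2 * (Real.sin (z/2))^2 := by
    have hz : z = 2 * (z/2) := by ring
    conv_lhs => rw [hz, Real.cos_two_mul']
    nlinarith [Real.sin_sq_add_cos_sq (z/2)]
  have : (sinc (z/2))^2 - (1/2) * (Real.cos z + 1) * (sinc (z/2))^2
      = (sinc (z/2))^2 * (Real.sin (z/2))^2 := by
    rw [hc]; ring
  rw [this, abs_of_nonneg (by positivity)]
  exact key z
end
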